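/- arXiv:1707.07320 — 2 statements merged into one kernel-verified Lean document; each statement's English description precedes it below -/
import Mathlib

section
/- If ⋯ ⊆₃ T₃ ⊆₂ T₂ ⊆₁ T₁ ⊆₀ T₀ is an infinite decreasing sequence of wide trees (with T_{n+1} ⊆_n T_n for all n), then T = ⋂_n T_n is a wide tree, and moreover T ⊆_n T_n and BN_n(T) = BN_n(T_{n+1}) for all n. -/
noncomputable section

/-- The type of countable ordinals, i.e. `ω₁` as a linearly ordered type. -/
abbrev W1 : Type := (Cardinal.aleph 1).ord.ToType

/-- A tree: a set of strings (finite sequences of countable ordinals)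
closed under initial segments. -/
def IsTree (T : Set (List W1)) : Prop := ∀ s ∈ T, ∀ t : List W1, t <+: s → t ∈ T

/-- The set of immediate successors of `s` in `T`. -/
def succs (T : Set (List W1)) (s : List W1) : Set (List W1) :=
  {t ∈ T | s <+: t ∧ t.length = s.length + 1}

/-- Branching nodes of `T`: nodes with at least two immediate successors. -/
def BN (T : Set (List W1)) : Set (List W1) :=
  {s ∈ T | 2 ≤ Cardinal.mk ↥(succs T s)}

/-- Branching nodes of `T` lying strictly below `s`. -/
def belowBN (T : Set (List W1)) (s : List W1) : Set (List W1) :=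
  {u ∈ BN T | u <+: s ∧ u ≠ s}

/-- `BN_n(T)`: branching nodes with exactly `n` branching nodes strictly below. -/
def BNn (T : Set (List W1)) (n : ℕ) : Set (List W1) :=
  {s ∈ BN T | (belowBN T s).Finite ∧ (belowBN T s).ncard = n}

/-- The restricted tree `T↾ₛ`. -/
def restr (T : Set (List W1)) (s : List W1) : Set (List W1) :=
  {t ∈ T | s <+: t ∨ t <+: s}

/-- A wide tree: nonempty tree, every node extends to a branching node,
and every branching node has `ℵ₁`-many immediate successors. -/
def Wide (T : Set (List W1)) : Prop :=
  T.Nonempty ∧ IsTree T ∧ (∀ s ∈ T, ∃ t ∈ BN T, s <+: t) ∧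
    ∀ s ∈ BN T, Cardinal.mk ↥(succs T s) = Cardinal.aleph 1

/-- The initial segment `x↾m` of an infinite sequence. -/
def seg (x : ℕ → W1) (m : ℕ) : List W1 := List.ofFn (fun i : Fin m => x i.1)

/-- `[T]`: the set of infinite branches of `T`. -/
def branches (T : Set (List W1)) : Set (ℕ → W1) := {x | ∀ m, seg x m ∈ T}

/-- `S ⊆_n T` : `BN_n(T) ⊆ S ⊆ T`. -/
def SubN (S T : Set (List W1)) (n : ℕ) : Prop := BNn T n ⊆ S ∧ S ⊆ T

/-- `S ⊆'_n T` : `S ⊆ T` and `BN_{n-1}(S) = BN_{n-1}(T)` (just `⊆` when `n = 0`). -/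
def SubN' (S T : Set (List W1)) (n : ℕ) : Prop :=
  S ⊆ T ∧ ∀ m : ℕ, n = m + 1 → BNn S m = BNn T m

/-! A node of `T_p` with at most `p` branching nodes below it extends to a node of
`BN_p(T_p) ⊆ T_{p+1}`, and in `T_{p+1}` it has at most `p + 1` branching nodes below it; so it
survives in every `T_q` and lies in `T = ⋂ₙ Tₙ`. Thus `T` contains `BN_m(T_{m+1})`, everything
below it and all immediate successors of `BN_{<m+1}(T_{m+1})`, which forces
`BN_m(T) = BN_m(T_{m+1})` with the same successor sets. Every branching node of `T` with `m`
branching nodes below it therefore keeps its `ℵ₁` successors from `T_{m+1}`. -/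

theorem List.IsPrefix.length_lt_of_ne {α : Type*} {l₁ l₂ : List α} (h : l₁ <+: l₂)
    (hne : l₁ ≠ l₂) : l₁.length < l₂.length :=
  h.length_le.lt_of_ne fun hl => hne (h.eq_of_length hl)

section BranchingNodes

variable {S T : Set (List W1)} {s t u v : List W1}

lemma belowBN_finite (T : Set (List W1)) (s : List W1) : (belowBN T s).Finite :=
  s.inits.toFinset.finite_toSet.subset fun u hu => by simpa [List.mem_inits] using hu.2.1

lemma succs_mono (h : S ⊆ T) (s : List W1) : succs S s ⊆ succs T s :=
  fun _ ht => ⟨h ht.1, ht.2⟩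

lemma BN_mono (h : S ⊆ T) : BN S ⊆ BN T :=
  fun s hs => ⟨h hs.1, hs.2.trans (Cardinal.mk_le_mk_of_subset (succs_mono h s))⟩

lemma belowBN_mono (h : S ⊆ T) (s : List W1) : belowBN S s ⊆ belowBN T s :=
  fun _ hu => ⟨BN_mono h hu.1, hu.2⟩

lemma ncard_belowBN_mono (h : S ⊆ T) (s : List W1) :
    (belowBN S s).ncard ≤ (belowBN T s).ncard :=
  Set.ncard_le_ncard (belowBN_mono h s) (belowBN_finite T s)

lemma succs_nonempty_of_mem_BN (h : s ∈ BN T) : (succs T s).Nonempty :=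
  Set.nonempty_coe_sort.mp <| Cardinal.mk_ne_zero_iff.mp (two_pos.trans_le h.2).ne'

lemma belowBN_subset_of_mem (h : v ∈ belowBN T u) : belowBN T v ⊆ belowBN T u :=
  fun w hw => ⟨hw.1, hw.2.1.trans h.2.1, fun hwu => by
    have := (hw.2.1.length_lt_of_ne hw.2.2).trans (h.2.1.length_lt_of_ne h.2.2)
    exact (hwu ▸ this).false⟩

lemma ncard_belowBN_lt_of_mem (h : v ∈ belowBN T u) :
    (belowBN T v).ncard < (belowBN T u).ncard :=
  Set.ncard_lt_ncard ⟨belowBN_subset_of_mem h, fun hsub => (hsub h).2.2 rfl⟩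
    (belowBN_finite T u)

lemma belowBN_of_mem_succs (hu : u ∈ BN T) (ht : t ∈ succs T u) :
    belowBN T t = insert u (belowBN T u) := by
  obtain ⟨-, hut, hlen⟩ := ht
  ext w
  constructor
  · rintro ⟨hwBN, hwt, hwne⟩
    have hwu : w <+: u :=
      List.prefix_of_prefix_length_le hwt hut (by have := hwt.length_lt_of_ne hwne; omega)
    rcases eq_or_ne w u with rfl | hne
    · exact Set.mem_insert _ _
    · exact Set.mem_insert_of_mem _ ⟨hwBN, hwu, hne⟩
  · rintro (rfl | ⟨hwBN, hwu, hne⟩)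
    · exact ⟨hu, hut, fun h => by rw [h] at hlen; omega⟩
    · exact ⟨hwBN, hwu.trans hut, fun h => by have := hwu.length_lt_of_ne hne; subst h; omega⟩

lemma ncard_belowBN_of_mem_succs (hu : u ∈ BN T) (ht : t ∈ succs T u) :
    (belowBN T t).ncard = (belowBN T u).ncard + 1 := by
  rw [belowBN_of_mem_succs hu ht,
    Set.ncard_insert_of_notMem (fun h => h.2.2 rfl) (belowBN_finite T u)]

/-- The branching nodes below `u` form a chain on which `v ↦ |belowBN T v|` is strictly
increasing, hence a bijection onto `{0, …, |belowBN T u| - 1}`. -/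
lemma exists_mem_belowBN_ncard_eq {i : ℕ} (hi : i < (belowBN T u).ncard) :
    ∃ v ∈ belowBN T u, (belowBN T v).ncard = i := by
  set f : List W1 → ℕ := fun v => (belowBN T v).ncard
  have hinj : Set.InjOn f (belowBN T u) := by
    intro v₁ h₁ v₂ h₂ heq
    by_contra hne
    rcases List.prefix_or_prefix_of_prefix h₁.2.1 h₂.2.1 with h | h
    · exact (ncard_belowBN_lt_of_mem ⟨h₁.1, h, hne⟩).ne heq
    · exact (ncard_belowBN_lt_of_mem ⟨h₂.1, h, Ne.symm hne⟩).ne heq.symm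
  have himage : f '' belowBN T u = ↑(Finset.range (belowBN T u).ncard) := by
    refine Set.eq_of_subset_of_ncard_le ?_ ?_ (Finset.finite_toSet _)
    · rintro _ ⟨v, hv, rfl⟩
      exact Finset.mem_coe.mpr (Finset.mem_range.mpr (ncard_belowBN_lt_of_mem hv))
    · rw [Set.ncard_coe_finset, Finset.card_range, hinj.ncard_image]
  show i ∈ f '' belowBN T u
  rw [himage]
  exact Finset.mem_coe.mpr (Finset.mem_range.mpr hi)

end BranchingNodes

section Wide

variable {T : Set (List W1)} {s : List W1} {n : ℕ}

/-- A shortest branching node above `s` has no branching node strictly between `s` and itself. -/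
lemma Wide.exists_BN_belowBN_eq (hW : Wide T) (hs : s ∈ T) :
    ∃ v ∈ BN T, s <+: v ∧ belowBN T v = belowBN T s := by
  obtain ⟨v, ⟨hvBN, hsv⟩, hmin⟩ :=
    exists_minimalFor_of_wellFoundedLT (fun v => v ∈ BN T ∧ s <+: v) List.length
      (hW.2.2.1 s hs)
  refine ⟨v, hvBN, hsv, Set.ext fun w => ⟨?_, ?_⟩⟩
  · rintro ⟨hwBN, hwv, hwne⟩
    have hsw : ¬ s <+: w := fun hsw => by
      have := hmin ⟨hwBN, hsw⟩ hwv.length_le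
      exact (hwv.length_lt_of_ne hwne).not_ge this
    obtain hws | hsw' := List.prefix_or_prefix_of_prefix hwv hsv
    · exact ⟨hwBN, hws, fun h => hsw (h ▸ List.prefix_refl w)⟩
    · exact (hsw hsw').elim
  · rintro ⟨hwBN, hws, hwne⟩
    exact ⟨hwBN, hws.trans hsv, fun h => by
      have := hws.length_lt_of_ne hwne; subst h; exact this.not_ge hsv.length_le⟩

lemma Wide.exists_BNn (hW : Wide T) (hs : s ∈ T) (hn : (belowBN T s).ncard ≤ n) :
    ∃ v ∈ BNn T n, s <+: v := by
  have level : ∀ {s}, s ∈ T → ∃ v ∈ BNn T (belowBN T s).ncard, s <+: v := fun hs => by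
    obtain ⟨v, hvBN, hsv, heq⟩ := hW.exists_BN_belowBN_eq hs
    exact ⟨v, ⟨hvBN, belowBN_finite T v, by rw [heq]⟩, hsv⟩
  induction n generalizing s with
  | zero => exact Nat.le_zero.mp hn ▸ level hs
  | succ n ih =>
    obtain hn | hn := hn.eq_or_lt
    · exact hn ▸ level hs
    obtain ⟨v, hv, hsv⟩ := ih hs (Nat.lt_succ_iff.mp hn)
    obtain ⟨t, ht⟩ := succs_nonempty_of_mem_BN hv.1
    obtain ⟨w, hw, htw⟩ := level ht.1
    rw [ncard_belowBN_of_mem_succs hv.1 ht, hv.2.2] at hw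
    exact ⟨w, hw, hsv.trans (ht.2.1.trans htw)⟩

end Wide

def lowerPart (T : Set (List W1)) (n : ℕ) : Set (List W1) :=
  {u ∈ T | (belowBN T u).ncard ≤ n}

section LowerPart

variable {S T : Set (List W1)} {u : List W1} {m n : ℕ}

lemma BNn_subset_lowerPart : BNn T n ⊆ lowerPart T n :=
  fun _ hu => ⟨hu.1.1, hu.2.2.le⟩

lemma SubN.lowerPart_subset (h : SubN S T n) (hW : Wide T) (hS : IsTree S) :
    lowerPart T n ⊆ S := fun u hu => by
  obtain ⟨v, hv, huv⟩ := hW.exists_BNn hu.1 hu.2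
  exact hS v (h.1 hv) u huv

lemma succs_eq_of_lowerPart_subset (hST : S ⊆ T) (hlow : lowerPart T n ⊆ S) (hu : u ∈ BN T)
    (hun : (belowBN T u).ncard < n) : succs S u = succs T u :=
  (succs_mono hST u).antisymm fun t ht =>
    ⟨hlow ⟨ht.1, by rw [ncard_belowBN_of_mem_succs hu ht]; omega⟩, ht.2⟩

lemma mem_BN_of_lowerPart_subset (hST : S ⊆ T) (hlow : lowerPart T n ⊆ S) (hu : u ∈ BN T)
    (hun : (belowBN T u).ncard < n) : u ∈ BN S :=
  ⟨hlow ⟨hu.1, hun.le⟩, by rw [succs_eq_of_lowerPart_subset hST hlow hu hun]; exact hu.2⟩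

lemma belowBN_eq_of_lowerPart_subset (hST : S ⊆ T) (hlow : lowerPart T n ⊆ S)
    (hun : (belowBN T u).ncard ≤ n) : belowBN S u = belowBN T u :=
  (belowBN_mono hST u).antisymm fun _ hw =>
    ⟨mem_BN_of_lowerPart_subset hST hlow hw.1 ((ncard_belowBN_lt_of_mem hw).trans_le hun), hw.2⟩

lemma BNn_eq_of_lowerPart_subset (hST : S ⊆ T) (hlow : lowerPart T n ⊆ S) (hm : m < n) :
    BNn S m = BNn T m := by
  ext u
  constructor
  · rintro ⟨huS, -, hcnt⟩
    refine ⟨BN_mono hST huS, belowBN_finite T u, ?_⟩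
    by_contra hne
    -- otherwise the node of `BN_m(T)` below `u` is a node of `BN_m(S)` below `u`
    obtain ⟨w, hw, hwm⟩ := exists_mem_belowBN_ncard_eq
      (lt_of_le_of_ne (hcnt ▸ ncard_belowBN_mono hST u) (Ne.symm hne))
    have hwS : w ∈ belowBN S u :=
      ⟨mem_BN_of_lowerPart_subset hST hlow hw.1 (hwm ▸ hm), hw.2⟩
    have hlt := ncard_belowBN_lt_of_mem hwS
    rw [belowBN_eq_of_lowerPart_subset hST hlow (hwm ▸ hm.le), hwm, hcnt] at hlt
    exact hlt.false
  · rintro ⟨huT, -, hcnt⟩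
    exact ⟨mem_BN_of_lowerPart_subset hST hlow huT (hcnt ▸ hm), belowBN_finite S u,
      by rw [belowBN_eq_of_lowerPart_subset hST hlow (hcnt ▸ hm.le), hcnt]⟩

end LowerPart

lemma isTree_iInter {ι : Sort*} {T : ι → Set (List W1)} (h : ∀ i, IsTree (T i)) :
    IsTree (⋂ i, T i) := fun s hs t hts =>
  Set.mem_iInter.mpr fun i => h i s (Set.mem_iInter.mp hs i) t hts

section Fusion

variable {T : ℕ → Set (List W1)}

lemma antitone_of_SubN (hdec : ∀ n, SubN (T (n + 1)) (T n) n) : Antitone T :=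
  antitone_nat_of_succ_le fun n => (hdec n).2

lemma lowerPart_subset_iInter (hW : ∀ n, Wide (T n)) (hdec : ∀ n, SubN (T (n + 1)) (T n) n)
    (p : ℕ) : lowerPart (T p) p ⊆ ⋂ q, T q := by
  intro u hu
  have hlater : ∀ q, p ≤ q → u ∈ lowerPart (T q) q := by
    intro q hpq
    induction q, hpq using Nat.le_induction with
    | base => exact hu
    | succ q _ ih =>
      exact ⟨(hdec q).lowerPart_subset (hW q) (hW (q + 1)).2.1 ih,
        (ncard_belowBN_mono (hdec q).2 u).trans (ih.2.trans q.le_succ)⟩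
  exact Set.mem_iInter.mpr fun q =>
    antitone_of_SubN hdec (le_max_right p q) (hlater (max p q) (le_max_left p q)).1

lemma BNn_iInter (hW : ∀ n, Wide (T n)) (hdec : ∀ n, SubN (T (n + 1)) (T n) n) (m : ℕ) :
    BNn (⋂ q, T q) m = BNn (T (m + 1)) m :=
  BNn_eq_of_lowerPart_subset (Set.iInter_subset T (m + 1))
    (lowerPart_subset_iInter hW hdec (m + 1)) m.lt_succ_self

lemma wide_iInter (hW : ∀ n, Wide (T n)) (hdec : ∀ n, SubN (T (n + 1)) (T n) n) :
    Wide (⋂ q, T q) := by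
  refine ⟨⟨[], Set.mem_iInter.mpr fun q => ?_⟩, isTree_iInter fun q => (hW q).2.1, ?_, ?_⟩
  · obtain ⟨s, hs⟩ := (hW q).1
    exact (hW q).2.1 s hs [] List.nil_prefix
  · intro s hs
    set c := (belowBN (T 0) s).ncard
    obtain ⟨v, hv, hsv⟩ := (hW (c + 1)).exists_BNn (Set.mem_iInter.mp hs (c + 1))
      (ncard_belowBN_mono (antitone_of_SubN hdec (Nat.zero_le _)) s)
    rw [← BNn_iInter hW hdec] at hv
    exact ⟨v, hv.1, hsv⟩
  · intro u hu
    set c := (belowBN (⋂ q, T q) u).ncard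
    have hu' : u ∈ BNn (T (c + 1)) c := by
      rw [← BNn_iInter hW hdec]
      exact ⟨hu, belowBN_finite _ u, rfl⟩
    rw [succs_eq_of_lowerPart_subset (Set.iInter_subset T (c + 1))
      (lowerPart_subset_iInter hW hdec (c + 1)) hu'.1 (hu'.2.2.trans_lt c.lt_succ_self)]
    exact (hW (c + 1)).2.2.2 u hu'.1

end Fusion

/-- the intersection of a fusion sequence `T_{n+1} ⊆_n T_n` of wide
trees is a wide tree `T` with `T ⊆_n T_n` and `BN_n(T) = BN_n(T_{n+1})`. -/
theorem stmt5 (T : ℕ → Set (List W1)) (hW : ∀ n, Wide (T n))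
    (hdec : ∀ n, SubN (T (n + 1)) (T n) n) :
    Wide (⋂ n, T n) ∧ ∀ n, SubN (⋂ n, T n) (T n) n ∧
      BNn (⋂ n, T n) n = BNn (T (n + 1)) n :=
  ⟨wide_iInter hW hdec, fun n =>
    ⟨⟨BNn_subset_lowerPart.trans (lowerPart_subset_iInter hW hdec n), Set.iInter_subset T n⟩,
      BNn_iInter hW hdec n⟩⟩

end
end

section
/- Let S be a wide tree and f : [S] → ω₁^ω a continuous map. Then there is a wide tree T ⊆ S such that either the image f''[T] is bounded (contained in β^ω for some β < ω₁) or f restricted to [T] is injective. -/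
noncomputable section

instance : TopologicalSpace W1 := ⊥

/-! If the image of some restricted tree `restr S v` is bounded, that tree is the answer.
Otherwise continuity gives, above every node `v` and every bound `β`, a node `w` whose branches
all share one value `≥ β` at some coordinate of `f`. Above any node `u` one then finds a
branching node, `ℵ₁` of its immediate successors and, above each of them, a node fixing one
common coordinate of `f` to pairwise distinct values: choose the values by transfinite recursion,
each above the earlier ones, and keep `ℵ₁` of them with the same coordinate. Iterating this from
the root along indices `σ ∈ ω₁^{<ω}` yields a wide subtree whose branching nodes are exactly the
chosen ones. Two distinct branches of it part at one of these, through different successors, so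
their images differ at the coordinate fixed there. -/

instance : DiscreteTopology W1 := ⟨rfl⟩

open Cardinal Topology

namespace List

variable {α : Type*}

theorem eq_of_prefix_of_prefix_of_length_eq {l₁ l₂ l₃ : List α} (h₁ : l₁ <+: l₃)
    (h₂ : l₂ <+: l₃) (h : l₁.length = l₂.length) : l₁ = l₂ :=
  (prefix_of_prefix_length_le h₁ h₂ h.le).eq_of_length h

theorem IsPrefix.eq_or_concat_prefix {l₁ l₂ : List α} (h : l₁ <+: l₂) :
    l₁ = l₂ ∨ ∃ a, l₁ ++ [a] <+: l₂ := by
  obtain ⟨_ | ⟨a, r⟩, rfl⟩ := h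
  · exact Or.inl (append_nil l₁).symm
  · exact Or.inr ⟨a, r, by simp⟩

theorem prefix_or_prefix_or_exists_fork (l₁ l₂ : List α) :
    l₁ <+: l₂ ∨ l₂ <+: l₁ ∨ ∃ p a b, a ≠ b ∧ p ++ [a] <+: l₁ ∧ p ++ [b] <+: l₂ := by
  induction l₁ generalizing l₂ with
  | nil => exact Or.inl nil_prefix
  | cons a l₁ ih =>
    cases l₂ with
    | nil => exact Or.inr (Or.inl nil_prefix)
    | cons b l₂ =>
      by_cases hab : a = b
      · subst hab
        rcases ih l₂ with h | h | ⟨p, c, d, hcd, h₁, h₂⟩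
        · exact Or.inl ((prefix_cons_inj a).2 h)
        · exact Or.inr (Or.inl ((prefix_cons_inj a).2 h))
        · exact Or.inr (Or.inr
            ⟨a :: p, c, d, hcd, (prefix_cons_inj a).2 h₁, (prefix_cons_inj a).2 h₂⟩)
      · exact Or.inr (Or.inr ⟨[], a, b, hab, by simp, by simp⟩)

theorem prefix_of_prefix_of_fork {p q l₁ l₂ : List α} {a b : α} (hab : a ≠ b)
    (h₁ : p ++ [a] <+: l₁) (h₂ : p ++ [b] <+: l₂) (hq₁ : q <+: l₁) (hq₂ : q <+: l₂) :
    q <+: p := by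
  refine prefix_of_prefix_length_le hq₁ ((prefix_append p [a]).trans h₁) ?_
  by_contra! hlt
  have ha : p ++ [a] <+: q := prefix_of_prefix_length_le h₁ hq₁ (by simpa using hlt)
  have hb : p ++ [b] <+: q := prefix_of_prefix_length_le h₂ hq₂ (by simpa using hlt)
  simpa [hab] using eq_of_prefix_of_prefix_of_length_eq ha hb (by simp)

end List

open List

section Segments

@[simp]
theorem length_seg (x : ℕ → W1) (m : ℕ) : (seg x m).length = m := by simp [seg]

theorem seg_prefix_seg (x : ℕ → W1) {k m : ℕ} (h : k ≤ m) : seg x k <+: seg x m := by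
  rw [prefix_iff_eq_take]
  apply ext_getElem <;> simp [seg, h]

theorem seg_length_eq_of_prefix {u v : List W1} {x : ℕ → W1} {m : ℕ} (hu : u <+: v)
    (hx : seg x m <+: v) (hm : u.length ≤ m) : seg x u.length = u :=
  eq_of_prefix_of_prefix_of_length_eq ((seg_prefix_seg x hm).trans hx) hu (by simp)

theorem seg_eq_seg_iff {x y : ℕ → W1} {m : ℕ} :
    seg y m = seg x m ↔ y ∈ PiNat.cylinder x m := by
  simp [seg, PiNat.mem_cylinder_iff, funext_iff, Fin.forall_iff]

theorem exists_seg_ne_of_ne {x y : ℕ → W1} (h : x ≠ y) : ∃ m, seg x m ≠ seg y m := by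
  obtain ⟨k, hk⟩ := Function.ne_iff.1 h
  exact ⟨k + 1, fun he => hk (PiNat.mem_cylinder_iff.1 (seg_eq_seg_iff.1 he) k k.lt_succ_self)⟩

end Segments

theorem mk_W1 : #W1 = ℵ₁ := by
  rw [mk_toType, card_ord]

instance : Nonempty W1 := by
  rw [← mk_ne_zero_iff, mk_W1]
  exact (aleph_pos 1).ne'

namespace W1

theorem exists_gt_of_countable {s : Set W1} (hs : s.Countable) : ∃ β, ∀ a ∈ s, a < β := by
  refine not_isCofinal_iff.1 fun hcof => ?_
  have := (Order.cof_le hcof).trans_lt (lt_aleph_one_iff.2 (le_aleph0_iff_set_countable.2 hs))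
  rw [Ordinal.cof_toType, isRegular_aleph_one.cof_ord] at this
  exact this.false

theorem countable_Iio (α : W1) : (Set.Iio α).Countable := by
  rw [← le_aleph0_iff_set_countable, ← lt_aleph_one_iff]
  simpa using mk_Iio_lt α

theorem exists_strictMono_choice {P : W1 → W1 → Prop} (h : ∀ α β, ∃ δ, β ≤ δ ∧ P α δ) :
    ∃ g : W1 → W1, StrictMono g ∧ ∀ α, P α (g α) := by
  have step : ∀ α (prev : ∀ γ, γ < α → W1), ∃ δ, P α δ ∧ ∀ γ hγ, prev γ hγ < δ := by
    intro α prev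
    have := (countable_Iio α).to_subtype
    obtain ⟨β, hβ⟩ :=
      exists_gt_of_countable (Set.countable_range fun γ : Set.Iio α => prev γ.1 γ.2)
    obtain ⟨δ, hβδ, hδ⟩ := h α β
    exact ⟨δ, hδ, fun γ hγ => (hβ _ ⟨⟨γ, hγ⟩, rfl⟩).trans_le hβδ⟩
  choose next hnext using step
  let g : W1 → W1 := wellFounded_lt.fix next
  have hg : ∀ α, g α = next α fun γ _ => g γ := wellFounded_lt.fix_eq next
  refine ⟨g, fun γ α hγ => ?_, fun α => ?_⟩
  · rw [hg α]
    exact (hnext α fun γ _ => g γ).2 γ hγ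
  · rw [hg α]
    exact (hnext α _).1

theorem exists_embedding_fiber (g : W1 → ℕ) : ∃ n, Nonempty (W1 ↪ g ⁻¹' {n}) := by
  obtain ⟨n, hn⟩ := infinite_pigeonhole_card_lt g (by simp) (by simp)
  refine ⟨n, (Cardinal.le_def _ _).1 ?_⟩
  rw [mk_W1, ← succ_aleph0]
  exact Order.succ_le_of_lt (by simpa using hn)

end W1

section Trees

variable {S T : Set (List W1)}

theorem Wide.nil_mem (hS : Wide S) : [] ∈ S :=
  let ⟨s, hs⟩ := hS.1
  hS.2.1 s hs [] nil_prefix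

theorem branches_mono (h : T ⊆ S) : branches T ⊆ branches S :=
  fun _ hx m => h (hx m)

theorem succs_eq_image (T : Set (List W1)) (s : List W1) :
    succs T s = (fun a => s ++ [a]) '' {a | s ++ [a] ∈ T} := by
  ext t
  constructor
  · rintro ⟨ht, ⟨r, rfl⟩, hlen⟩
    obtain ⟨a, rfl⟩ := length_eq_one_iff.1 (by simpa using hlen)
    exact ⟨a, ht, rfl⟩
  · rintro ⟨a, ha, rfl⟩
    exact ⟨ha, prefix_append s [a], by simp⟩

theorem mk_succs (T : Set (List W1)) (s : List W1) :
    #(succs T s) = #{a | s ++ [a] ∈ T} := by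
  rw [succs_eq_image]
  exact mk_image_eq fun a b h => by simpa using h

theorem mk_succs_le (T : Set (List W1)) (s : List W1) : #(succs T s) ≤ ℵ₁ :=
  mk_succs T s ▸ mk_W1 ▸ mk_set_le _

theorem Wide.exists_embedding_succ (hS : Wide S) {s : List W1} (hs : s ∈ BN S) :
    Nonempty (W1 ↪ {a | s ++ [a] ∈ S}) := by
  rw [← Cardinal.le_def, mk_W1, ← mk_succs, hS.2.2.2 s hs]

theorem restr_subset (S : Set (List W1)) (v : List W1) : restr S v ⊆ S :=
  fun _ ht => ht.1

theorem seg_length_eq_of_mem_branches_restr {v : List W1} {x : ℕ → W1}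
    (hx : x ∈ branches (restr S v)) : seg x v.length = v := by
  rcases (hx v.length).2 with h | h
  · exact (h.eq_of_length (by simp)).symm
  · exact h.eq_of_length (by simp)

theorem succs_restr {v b : List W1} (hvb : v <+: b) : succs (restr S v) b = succs S b := by
  ext t
  exact ⟨fun ht => ⟨ht.1.1, ht.2⟩, fun ht => ⟨⟨ht.1, Or.inl (hvb.trans ht.2.1)⟩, ht.2⟩⟩

/-- Below `v` the tree `restr S v` is a single path. -/
theorem prefix_of_mem_BN_restr {v s : List W1} (hs : s ∈ BN (restr S v)) : v <+: s := by
  by_contra hvs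
  have hsv : s <+: v := hs.1.2.resolve_left hvs
  have hlt : s.length < v.length :=
    lt_of_le_of_ne hsv.length_le fun h => hvs (hsv.eq_of_length h ▸ prefix_rfl)
  have hsub : succs (restr S v) s ⊆ {v.take (s.length + 1)} := by
    rintro t ⟨⟨-, hvt | htv⟩, -, hlen⟩
    · have := hvt.length_le
      rw [Set.mem_singleton_iff, ← hvt.eq_of_length (by omega), take_of_length_le (by omega)]
    · rw [Set.mem_singleton_iff, prefix_iff_eq_take.1 htv, hlen]
  have := hs.2.trans ((mk_le_mk_of_subset hsub).trans (mk_singleton _).le)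
  norm_num at this

theorem Wide.restr (hS : Wide S) {v : List W1} (hv : v ∈ S) : Wide (restr S v) := by
  refine ⟨⟨v, hv, Or.inl prefix_rfl⟩, ?_, ?_, ?_⟩
  · rintro s ⟨hsS, hvs | hsv⟩ t hts
    · exact ⟨hS.2.1 s hsS t hts, prefix_or_prefix_of_prefix hvs hts⟩
    · exact ⟨hS.2.1 s hsS t hts, Or.inr (hts.trans hsv)⟩
  · rintro s ⟨hsS, hs⟩
    obtain ⟨w, hw, hsw, hvw⟩ : ∃ w ∈ S, s <+: w ∧ v <+: w :=
      hs.elim (fun h => ⟨s, hsS, prefix_rfl, h⟩) fun h => ⟨v, hv, h, prefix_rfl⟩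
    obtain ⟨b, hb, hwb⟩ := hS.2.2.1 w hw
    have hvb := hvw.trans hwb
    exact ⟨b, ⟨⟨hb.1, Or.inl hvb⟩, by rw [succs_restr hvb]; exact hb.2⟩, hsw.trans hwb⟩
  · intro s hs
    have hvs := prefix_of_mem_BN_restr hs
    rw [succs_restr hvs]
    exact hS.2.2.2 s ⟨hs.1.1, succs_restr hvs ▸ hs.2⟩

end Trees

def Decides (S : Set (List W1)) (f : (ℕ → W1) → ℕ → W1) (w : List W1) (n : ℕ) (δ : W1) :
    Prop :=
  ∀ y ∈ branches S, seg y w.length = w → f y n = δ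

def DecidesUnbounded (S : Set (List W1)) (f : (ℕ → W1) → ℕ → W1) : Prop :=
  ∀ v ∈ S, ∀ β, ∃ w ∈ S, v <+: w ∧ ∃ n δ, β ≤ δ ∧ Decides S f w n δ

section Continuity

variable {S : Set (List W1)} {f : (ℕ → W1) → ℕ → W1}

theorem Decides.mono {w w' : List W1} {n : ℕ} {δ : W1} (h : Decides S f w n δ)
    (hw : w <+: w') : Decides S f w' n δ :=
  fun y hy hyw => h y hy (seg_length_eq_of_prefix hw (by rw [hyw]) hw.length_le)

theorem ContinuousOn.exists_decides (hf : ContinuousOn f (branches S)) {x : ℕ → W1}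
    (hx : x ∈ branches S) (n : ℕ) : ∃ m, Decides S f (seg x m) n (f x n) := by
  have h : {y | f y n = f x n} ∈ 𝓝[branches S] x :=
    ((continuous_apply n).continuousAt.comp_continuousWithinAt (hf x hx))
      ((isOpen_discrete {f x n}).mem_nhds rfl)
  obtain ⟨_, ⟨⟨z, m, rfl⟩, hxz⟩, hsub⟩ :=
    (nhdsWithin_hasBasis (PiNat.isTopologicalBasis_cylinders _).nhds_hasBasis _).mem_iff.1 h
  refine ⟨m, fun y hy hyx => hsub ⟨?_, hy⟩⟩
  rw [← PiNat.mem_cylinder_iff_eq.1 hxz]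
  exact seg_eq_seg_iff.1 (by simpa using hyx)

theorem ContinuousOn.decidesUnbounded (hf : ContinuousOn f (branches S))
    (hunb : ∀ v ∈ S, ∀ β, ∃ x ∈ branches (restr S v), ∃ n, β ≤ f x n) :
    DecidesUnbounded S f := by
  intro v hv β
  obtain ⟨x, hx, n, hβ⟩ := hunb v hv β
  have hxS := branches_mono (restr_subset S v) hx
  obtain ⟨m, hm⟩ := hf.exists_decides hxS n
  refine ⟨seg x (max m v.length), hxS _, ?_, n, f x n, hβ,
    hm.mono (seg_prefix_seg x (le_max_left _ _))⟩
  simpa [seg_length_eq_of_mem_branches_restr hx] using seg_prefix_seg x (le_max_right m v.length)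

end Continuity

structure IsSplitAt (S : Set (List W1)) (f : (ℕ → W1) → ℕ → W1) (u split : List W1)
    (succ : W1 → W1) (next : W1 → List W1) (coord : ℕ) (val : W1 → W1) : Prop where
  prefix_split : u <+: split
  succ_injective : Function.Injective succ
  split_append_prefix_next : ∀ α, split ++ [succ α] <+: next α
  next_mem : ∀ α, next α ∈ S
  val_injective : Function.Injective val
  decides_next : ∀ α, Decides S f (next α) coord (val α)

structure SplitData (S : Set (List W1)) (f : (ℕ → W1) → ℕ → W1) where
  split : List W1 → List W1
  succ : List W1 → W1 → W1
  next : List W1 → W1 → List W1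
  coord : List W1 → ℕ
  val : List W1 → W1 → W1
  isSplitAt : ∀ u ∈ S, IsSplitAt S f u (split u) (succ u) (next u) (coord u) (val u)

section Splitting

variable {S : Set (List W1)} {f : (ℕ → W1) → ℕ → W1}

theorem Wide.exists_isSplitAt (hS : Wide S) (hdec : DecidesUnbounded S f) {u : List W1}
    (hu : u ∈ S) : ∃ split succ next coord val, IsSplitAt S f u split succ next coord val := by
  obtain ⟨b, hb, hub⟩ := hS.2.2.1 u hu
  obtain ⟨c⟩ := hS.exists_embedding_succ hb
  have hP : ∀ α β, ∃ δ, β ≤ δ ∧ ∃ w ∈ S, b ++ [(c α).1] <+: w ∧ ∃ n, Decides S f w n δ :=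
    fun α β =>
      let ⟨w, hw, hcw, n, δ, hβδ, hδ⟩ := hdec _ (c α).2 β
      ⟨δ, hβδ, w, hw, hcw, n, hδ⟩
  obtain ⟨g, hg, hgP⟩ := W1.exists_strictMono_choice hP
  choose w hw hcw n hn using hgP
  obtain ⟨N, ⟨ι⟩⟩ := W1.exists_embedding_fiber n
  refine ⟨b, fun α => (c (ι α).1).1, fun α => w (ι α).1, N, fun α => g (ι α).1,
    ⟨hub, ?_, fun α => hcw _, fun α => hw _, ?_, fun α => ?_⟩⟩
  · exact Subtype.val_injective.comp (c.injective.comp (Subtype.val_injective.comp ι.injective))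
  · exact hg.injective.comp (Subtype.val_injective.comp ι.injective)
  · obtain ⟨γ, hγ⟩ := ι α
    exact (show n γ = N from hγ) ▸ hn γ

theorem Wide.nonempty_splitData (hS : Wide S) (hdec : DecidesUnbounded S f) :
    Nonempty (SplitData S f) := by
  choose! split succ next coord val h using fun u (hu : u ∈ S) => hS.exists_isSplitAt hdec hu
  exact ⟨⟨split, succ, next, coord, val, h⟩⟩

end Splitting

namespace SplitData

variable {S : Set (List W1)} {f : (ℕ → W1) → ℕ → W1} (D : SplitData S f)

def node (σ : List W1) : List W1 := σ.foldl D.next []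

def branchNode (σ : List W1) : List W1 := D.split (D.node σ)

def tree : Set (List W1) := {w | ∃ σ, w <+: D.node σ}

theorem node_concat (σ : List W1) (α : W1) : D.node (σ ++ [α]) = D.next (D.node σ) α := by
  simp [node]

section

variable (h0 : [] ∈ S)
include h0

theorem node_mem (σ : List W1) : D.node σ ∈ S := by
  induction σ using reverseRecOn with
  | nil => exact h0
  | append_singleton σ α ih => exact D.node_concat σ α ▸ (D.isSplitAt _ ih).next_mem α

theorem isSplitAt_node (σ : List W1) :
    IsSplitAt S f (D.node σ) (D.branchNode σ) (D.succ (D.node σ)) (D.next (D.node σ))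
      (D.coord (D.node σ)) (D.val (D.node σ)) :=
  D.isSplitAt _ (D.node_mem h0 σ)

theorem branchNode_append_prefix_node_concat (σ : List W1) (α : W1) :
    D.branchNode σ ++ [D.succ (D.node σ) α] <+: D.node (σ ++ [α]) :=
  D.node_concat σ α ▸ (D.isSplitAt_node h0 σ).split_append_prefix_next α

theorem node_prefix_branchNode (σ : List W1) : D.node σ <+: D.branchNode σ :=
  (D.isSplitAt_node h0 σ).prefix_split

theorem node_mono {σ τ : List W1} (h : σ <+: τ) : D.node σ <+: D.node τ := by
  induction τ using reverseRecOn with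
  | nil => rw [prefix_nil.1 h]
  | append_singleton τ α ih =>
    rcases prefix_concat_iff.1 h with rfl | h
    · exact prefix_rfl
    · exact (ih h).trans <| (D.node_prefix_branchNode h0 τ).trans <|
        (prefix_append _ _).trans (D.branchNode_append_prefix_node_concat h0 τ α)

theorem branchNode_append_prefix_node {σ τ : List W1} {α : W1} (h : σ ++ [α] <+: τ) :
    D.branchNode σ ++ [D.succ (D.node σ) α] <+: D.node τ :=
  (D.branchNode_append_prefix_node_concat h0 σ α).trans (D.node_mono h0 h)

theorem branchNode_prefix_node {σ τ : List W1} {α : W1} (h : σ ++ [α] <+: τ) :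
    D.branchNode σ <+: D.node τ :=
  (prefix_append _ _).trans (D.branchNode_append_prefix_node h0 h)

theorem branchNode_mono {σ τ : List W1} (h : σ <+: τ) : D.branchNode σ <+: D.branchNode τ := by
  rcases h.eq_or_concat_prefix with rfl | ⟨α, hα⟩
  · exact prefix_rfl
  · exact (D.branchNode_prefix_node h0 hα).trans (D.node_prefix_branchNode h0 τ)

theorem prefix_branchNode_of_fork {σ τ τ' q : List W1} {α α' : W1} (hα : α ≠ α')
    (hτ : σ ++ [α] <+: τ) (hτ' : σ ++ [α'] <+: τ') (hq : q <+: D.node τ)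
    (hq' : q <+: D.node τ') : q <+: D.branchNode σ :=
  prefix_of_prefix_of_fork ((D.isSplitAt_node h0 σ).succ_injective.ne hα)
    (D.branchNode_append_prefix_node h0 hτ) (D.branchNode_append_prefix_node h0 hτ') hq hq'

theorem exists_fork_of_ne {τ τ' q q' : List W1} (hq : q <+: D.node τ) (hq' : q' <+: D.node τ')
    (hlen : q.length = q'.length) (hne : q ≠ q') :
    ∃ σ α α', α ≠ α' ∧ σ ++ [α] <+: τ ∧ σ ++ [α'] <+: τ' := by
  rcases prefix_or_prefix_or_exists_fork τ τ' with h | h | h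
  · exact (hne (eq_of_prefix_of_prefix_of_length_eq (hq.trans (D.node_mono h0 h)) hq' hlen)).elim
  · exact (hne (eq_of_prefix_of_prefix_of_length_eq hq (hq'.trans (D.node_mono h0 h)) hlen)).elim
  · exact h

theorem mk_succs_branchNode (σ : List W1) : #(succs D.tree (D.branchNode σ)) = ℵ₁ := by
  refine (mk_succs_le _ _).antisymm ?_
  rw [mk_succs, ← mk_W1]
  refine mk_le_of_injective (f := fun α => ⟨D.succ (D.node σ) α, σ ++ [α], ?_⟩) ?_
  · exact D.branchNode_append_prefix_node_concat h0 σ α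
  · exact fun α β h => (D.isSplitAt_node h0 σ).succ_injective (congrArg Subtype.val h)

theorem branchNode_mem_BN (σ : List W1) : D.branchNode σ ∈ BN D.tree := by
  refine ⟨⟨σ ++ [Classical.arbitrary W1], ?_⟩, ?_⟩
  · exact (prefix_append _ _).trans (D.branchNode_append_prefix_node_concat h0 σ _)
  · rw [D.mk_succs_branchNode h0 σ]
    exact ofNat_lt_aleph0.le.trans aleph0_lt_aleph_one.le

theorem exists_eq_branchNode_of_mem_BN {s : List W1} (hs : s ∈ BN D.tree) :
    ∃ σ, s = D.branchNode σ := by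
  obtain ⟨⟨t, ⟨τ, hτ⟩, hst, hlen⟩, ⟨t', ⟨τ', hτ'⟩, hst', hlen'⟩, hne⟩ := two_le_iff.1 hs.2
  obtain ⟨σ, α, α', hα, hσ, hσ'⟩ :=
    D.exists_fork_of_ne h0 hτ hτ' (hlen.trans hlen'.symm) fun h => hne (Subtype.ext h)
  have hsb := D.prefix_branchNode_of_fork h0 hα hσ hσ' (hst.trans hτ) (hst'.trans hτ')
  suffices ¬ s.length < (D.branchNode σ).length from
    ⟨σ, hsb.eq_of_length (hsb.length_le.antisymm (not_lt.1 this))⟩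
  refine fun hlt => hne (Subtype.ext (show t = t' from ?_))
  exact eq_of_prefix_of_prefix_of_length_eq
    (prefix_of_prefix_length_le hτ (D.branchNode_prefix_node h0 hσ) (by omega))
    (prefix_of_prefix_length_le hτ' (D.branchNode_prefix_node h0 hσ') (by omega))
    (hlen.trans hlen'.symm)

theorem wide_tree : Wide D.tree := by
  refine ⟨⟨[], [], nil_prefix⟩, fun s ⟨σ, hσ⟩ t hts => ⟨σ, hts.trans hσ⟩, ?_, ?_⟩
  · rintro s ⟨σ, hσ⟩
    exact ⟨D.branchNode σ, D.branchNode_mem_BN h0 σ, hσ.trans (D.node_prefix_branchNode h0 σ)⟩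
  · intro s hs
    obtain ⟨σ, rfl⟩ := D.exists_eq_branchNode_of_mem_BN h0 hs
    exact D.mk_succs_branchNode h0 σ

theorem tree_subset (hT : IsTree S) : D.tree ⊆ S :=
  fun w ⟨σ, hw⟩ => hT _ (D.node_mem h0 σ) w hw

/-- Any node of the tree incomparable with `node (σ ++ [α])` forks off from it below
`branchNode σ`. -/
theorem seg_node_concat_of_mem_branches {x : ℕ → W1} (hx : x ∈ branches D.tree)
    {σ : List W1} {α : W1}
    (hxσ : seg x ((D.branchNode σ).length + 1) = D.branchNode σ ++ [D.succ (D.node σ) α]) :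
    seg x (D.node (σ ++ [α])).length = D.node (σ ++ [α]) := by
  set w := D.node (σ ++ [α])
  set p := D.branchNode σ ++ [D.succ (D.node σ) α]
  have hpw : p <+: w := D.branchNode_append_prefix_node_concat h0 σ α
  obtain ⟨ρ, hρ⟩ := hx w.length
  have hpρ : p <+: D.node ρ := by
    rw [← hxσ]
    exact (seg_prefix_seg x (by simpa [p] using hpw.length_le)).trans hρ
  suffices σ ++ [α] <+: ρ from
    eq_of_prefix_of_prefix_of_length_eq hρ (D.node_mono h0 this) (by simp)
  by_contra hσρ
  suffices p <+: D.branchNode σ by simpa [p] using this.length_le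
  rcases prefix_or_prefix_or_exists_fork (σ ++ [α]) ρ with h | h | ⟨ν, δ, δ', hδ, hν, hν'⟩
  · exact absurd h hσρ
  · rcases prefix_concat_iff.1 h with rfl | h
    · exact absurd prefix_rfl hσρ
    · exact hpρ.trans ((D.node_mono h0 h).trans (D.node_prefix_branchNode h0 σ))
  · have hνσ : ν <+: σ := prefix_of_prefix_length_le ((prefix_append _ _).trans hν)
      (prefix_append _ _) (by simpa using hν.length_le)
    exact (D.prefix_branchNode_of_fork h0 hδ hν hν' hpw hpρ).trans (D.branchNode_mono h0 hνσ)

theorem apply_coord_eq_val (hT : IsTree S) {x : ℕ → W1} (hx : x ∈ branches D.tree)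
    {m : ℕ} {σ τ : List W1} {α : W1} (hxτ : seg x m <+: D.node τ) (hστ : σ ++ [α] <+: τ)
    (hm : (D.branchNode σ).length < m) :
    f x (D.coord (D.node σ)) = D.val (D.node σ) α := by
  have hxσ := seg_length_eq_of_prefix (D.branchNode_append_prefix_node h0 hστ) hxτ
    (by simpa using hm)
  refine (D.isSplitAt_node h0 σ).decides_next α x (branches_mono (D.tree_subset h0 hT) hx) ?_
  rw [← node_concat]
  exact D.seg_node_concat_of_mem_branches h0 hx (by simpa using hxσ)

theorem injOn_tree (hT : IsTree S) : Set.InjOn f (branches D.tree) := by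
  intro x hx y hy hxy
  by_contra hne
  obtain ⟨m, hm⟩ := exists_seg_ne_of_ne hne
  obtain ⟨τ, hτ⟩ := hx m
  obtain ⟨τ', hτ'⟩ := hy m
  obtain ⟨σ, α, α', hα, hσ, hσ'⟩ := D.exists_fork_of_ne h0 hτ hτ' (by simp) hm
  have hlt : (D.branchNode σ).length < m := by
    by_contra! hle
    exact hm <| eq_of_prefix_of_prefix_of_length_eq
      (prefix_of_prefix_length_le hτ (D.branchNode_prefix_node h0 hσ) (by simpa using hle))
      (prefix_of_prefix_length_le hτ' (D.branchNode_prefix_node h0 hσ') (by simpa using hle))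
      (by simp)
  refine hα ((D.isSplitAt_node h0 σ).val_injective ?_)
  rw [← D.apply_coord_eq_val h0 hT hx hτ hσ hlt, ← D.apply_coord_eq_val h0 hT hy hτ' hσ' hlt,
    hxy]

end

end SplitData

/-- on a wide subtree, a continuous map is either bounded or
injective. -/
theorem stmt7 (S : Set (List W1)) (hS : Wide S)
    (f : (ℕ → W1) → (ℕ → W1)) (hf : ContinuousOn f (branches S)) :
    ∃ T : Set (List W1), Wide T ∧ T ⊆ S ∧
      ((∃ β : W1, ∀ y ∈ f '' branches T, ∀ n, y n < β) ∨
        Set.InjOn f (branches T)) := by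
  by_cases hbdd : ∃ v ∈ S, ∃ β, ∀ x ∈ branches (restr S v), ∀ n, f x n < β
  · obtain ⟨v, hv, β, hβ⟩ := hbdd
    refine ⟨restr S v, hS.restr hv, restr_subset S v, Or.inl ⟨β, ?_⟩⟩
    rintro _ ⟨x, hx, rfl⟩
    exact hβ x hx
  · push Not at hbdd
    obtain ⟨D⟩ := hS.nonempty_splitData (hf.decidesUnbounded hbdd)
    exact ⟨D.tree, D.wide_tree hS.nil_mem, D.tree_subset hS.nil_mem hS.2.1,
      Or.inr (D.injOn_tree hS.nil_mem hS.2.1)⟩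
end
end
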